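/- arXiv:1711.00609 — 5 statements merged into one kernel-verified Lean document; each statement's English description precedes it below -/
import Mathlib

section
/- The all-x profile x⃗ is the strict maximizer of Φ^S over all profiles if and only if for every nonempty T⊆N, α > (|T∩S| − d(T,N∖T)) / d(T,N), where d(T,N) > 0 is assumed for every nonempty T (e.g., G has no isolated vertices). -/
open Finset

/-- Pairwise coordination payoff: `true` is action `x`, `false` is action `y`. -/
def coordPayoff (α : ℝ) : Bool → Bool → ℝ
  | true, true => 1 + α
  | false, false => 1
  | _, _ => 0

/-- Edge-based potential `Φ^S`. -/
def phi {V : Type*} [Fintype V] [DecidableEq V] (G : SimpleGraph V) [DecidableRel G.Adj]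
    (α : ℝ) (S : Finset V) (a : V → Bool) : ℝ :=
  (∑ e ∈ G.edgeFinset,
    Sym2.lift ⟨fun i j => coordPayoff α (a i) (a j),
      fun i j => by show coordPayoff α (a i) (a j) = coordPayoff α (a j) (a i); cases a i <;> cases a j <;> rfl⟩ e)
  + ∑ i ∈ S, (if a i = false then (1 : ℝ) else 0)

open scoped Classical in
/-- `d(A,B)`: number of edges with one endpoint in `A` and one in `B`. -/
noncomputable def dCount {V : Type*} [Fintype V] [DecidableEq V] (G : SimpleGraph V)
    [DecidableRel G.Adj] (A B : Finset V) : ℕ :=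
  (G.edgeFinset.filter fun e => ∃ i ∈ A, ∃ j ∈ B, e = s(i, j)).card

open scoped Classical

private lemma sym2_exists_iff {V : Type*} (A B : Finset V) (x y : V) :
    (∃ i ∈ A, ∃ j ∈ B, s(x,y) = s(i,j)) ↔ (x ∈ A ∧ y ∈ B) ∨ (y ∈ A ∧ x ∈ B) := by
  constructor
  · rintro ⟨i, hi, j, hj, h⟩
    rw [Sym2.eq_iff] at h
    rcases h with ⟨h1, h2⟩ | ⟨h1, h2⟩
    · subst h1; subst h2; exact Or.inl ⟨hi, hj⟩
    · subst h1; subst h2; exact Or.inr ⟨hi, hj⟩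
  · rintro (⟨hx, hy⟩ | ⟨hy, hx⟩)
    · exact ⟨x, hx, y, hy, rfl⟩
    · exact ⟨y, hy, x, hx, Sym2.eq_swap⟩

private lemma dCount_cast {V : Type*} [Fintype V] [DecidableEq V] (G : SimpleGraph V)
    [DecidableRel G.Adj] (A B : Finset V) :
    (dCount G A B : ℝ)
      = ∑ e ∈ G.edgeFinset, (if ∃ i ∈ A, ∃ j ∈ B, e = s(i,j) then (1:ℝ) else 0) := by
  rw [dCount, Finset.sum_boole]

private lemma phi_diff {V : Type*} [Fintype V] [DecidableEq V] (G : SimpleGraph V)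
    [DecidableRel G.Adj] (α : ℝ) (S : Finset V) (a : V → Bool) :
    phi G α S (fun _ => true) - phi G α S a
      = α * dCount G (univ.filter fun i => a i = false) univ
        + dCount G (univ.filter fun i => a i = false)
            ((univ.filter fun i => a i = false)ᶜ)
        - (((univ.filter fun i => a i = false) ∩ S).card : ℝ) := by
  set T := univ.filter fun i => a i = false with hT
  have hmemT : ∀ i, i ∈ T ↔ a i = false := by intro i; simp [hT]
  have hmemTc : ∀ i, i ∈ Tᶜ ↔ a i = true := by
    intro i; simp [hT, Finset.mem_compl]
  have hcard : (((T ∩ S).card : ℝ)) = ∑ i ∈ S, (if a i = false then (1 : ℝ) else 0) := by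
    rw [Finset.sum_boole]
    congr 1
    rw [hT]
    congr 1
    ext i
    simp [and_comm]
  rw [phi, phi, dCount_cast, dCount_cast, hcard]
  have h0 : ∑ i ∈ S, (if (fun _ => true : V → Bool) i = false then (1:ℝ) else 0) = 0 := by
    simp
  rw [h0]
  rw [Finset.mul_sum, ← Finset.sum_add_distrib]
  have key : ∀ e ∈ G.edgeFinset,
      (Sym2.lift ⟨fun i j => coordPayoff α ((fun _ => true : V → Bool) i) ((fun _ => true : V → Bool) j), by intro i j; cases (true:Bool) <;> rfl⟩ e)
        - (Sym2.lift ⟨fun i j => coordPayoff α (a i) (a j), by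
            intro i j
            show coordPayoff α (a i) (a j) = coordPayoff α (a j) (a i)
            cases a i <;> cases a j <;> rfl⟩ e)
      = α * (if ∃ i ∈ T, ∃ j ∈ (univ : Finset V), e = s(i,j) then (1:ℝ) else 0)
        + (if ∃ i ∈ T, ∃ j ∈ Tᶜ, e = s(i,j) then (1:ℝ) else 0) := by
    intro e _
    induction e using Sym2.ind with
    | _ x y =>
      rw [Sym2.lift_mk, Sym2.lift_mk]
      simp only [sym2_exists_iff]
      cases hx : a x <;> cases hy : a y <;>
        simp [coordPayoff, hx, hy, hmemT, hmemTc] <;> ring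
  have := Finset.sum_congr rfl key
  rw [Finset.sum_sub_distrib] at this
  linarith [this]

/-- `x⃗` is the strict maximizer of `Φ^S` iff for every nonempty `T`,
`α > (|T∩S| − d(T,N∖T)) / d(T,N)`. -/
theorem allx_strict_max_iff {V : Type*} [Fintype V] [DecidableEq V] (G : SimpleGraph V)
    [DecidableRel G.Adj] (α : ℝ) (S : Finset V)
    (hd : ∀ T : Finset V, T.Nonempty → 0 < dCount G T Finset.univ) :
    (∀ a : V → Bool, a ≠ (fun _ => true) → phi G α S (fun _ => true) > phi G α S a)
      ↔ ∀ T : Finset V, T.Nonempty →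
          α > (((T ∩ S).card : ℝ) - (dCount G T Tᶜ : ℝ)) / (dCount G T Finset.univ : ℝ) := by
  constructor
  · intro h T hTne
    set a : V → Bool := fun i => decide (i ∉ T) with ha
    have hfil : (univ.filter fun i => a i = false) = T := by
      ext i; simp [ha]
    have hane : a ≠ (fun _ => true) := by
      obtain ⟨i, hi⟩ := hTne
      intro hc
      have := congrFun hc i
      simp [ha, hi] at this
    have hgt := h a hane
    have hdiff := phi_diff G α S a
    rw [hfil] at hdiff
    have hdpos : (0:ℝ) < (dCount G T Finset.univ : ℝ) := by
      exact_mod_cast hd T hTne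
    rw [gt_iff_lt, div_lt_iff₀ hdpos]
    have : 0 < phi G α S (fun _ => true) - phi G α S a := by linarith
    rw [hdiff] at this
    linarith
  · intro h a hane
    set T := univ.filter fun i => a i = false with hT
    have hTne : T.Nonempty := by
      rw [Finset.filter_nonempty_iff]
      by_contra hc
      push_neg at hc
      apply hane
      funext i
      have := hc i (mem_univ i)
      cases hai : a i
      · exact absurd hai (by simpa [hai] using this)
      · rfl
    have hdpos : (0:ℝ) < (dCount G T Finset.univ : ℝ) := by
      exact_mod_cast hd T hTne
    have hα := h T hTne
    rw [gt_iff_lt, div_lt_iff₀ hdpos] at hα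
    have hdiff := phi_diff G α S a
    rw [← hT] at hdiff
    have : 0 < phi G α S (fun _ => true) - phi G α S a := by rw [hdiff]; linarith
    linarith
end

section
/- On the n-node ring graph, if the set T of y-players is a disjoint union of p≥1 maximal arcs (contiguous chains) T_1,…,T_p with 0<|T|<n, then Φ^S(a^T) = (1+α)(n−|T|−p) + (|T|−p) + Σ_{j=1}^p |S∩T_j|. -/
open Finset

/-- The ring (cycle) graph on `ZMod n`. -/
def ringGraph (n : ℕ) : SimpleGraph (ZMod n) where
  Adj i j := i ≠ j ∧ (j = i + 1 ∨ i = j + 1)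
  symm := by constructor; intro i j h; exact ⟨h.1.symm, h.2.symm⟩
  loopless := by constructor; intro i h; exact h.1 rfl

instance (n : ℕ) : DecidableRel (ringGraph n).Adj :=
  fun i j => inferInstanceAs (Decidable (i ≠ j ∧ (j = i + 1 ∨ i = j + 1)))

/-- The arc `[i, i+t] = {i, i+1, …, i+t}` (indices mod `n`). -/
def arc (n : ℕ) (i : ZMod n) (t : ℕ) : Finset (ZMod n) :=
  (Finset.range (t + 1)).image fun m : ℕ => i + (m : ZMod n)

/-!
Read the ring edge by edge as the pairs `{i, i+1}`: an `x`-`x` edge is worth `1 + α`, a `y`-`y`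
edge `1`, and a mixed edge nothing. Every arc ends in exactly one edge leaving `T`, so there are
`p` such edges; since `i ↦ i + 1` is a permutation, as many edges enter `T` as leave it. Hence
`|T| - p` edges lie inside `T` and `n - |T| - p` outside it, while the bonus term counts
`|S ∩ T|`, which splits over the disjoint arcs.
-/

lemma natCast_ne_zero_of_lt {n k : ℕ} (hk0 : 0 < k) (hkn : k < n) : (k : ZMod n) ≠ 0 := by
  rw [Ne, ZMod.natCast_eq_zero_iff]
  exact fun h => absurd (Nat.le_of_dvd hk0 h) (by omega)

lemma card_filter_apply_notMem_eq {α : Type*} [Fintype α] [DecidableEq α]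
    (σ : Equiv.Perm α) (T : Finset α) :
    #{i ∈ T | σ i ∉ T} = #{i ∈ Tᶜ | σ i ∈ T} := by
  have hpre : #{i | σ i ∈ T} = #T := by
    rw [← card_map σ.toEmbedding]
    congr 1; ext j; simp
  have hT := card_filter_add_card_filter_not (s := T) (fun i => σ i ∈ T)
  have hpre' := card_filter_add_card_filter_not (s := {i | σ i ∈ T}) (· ∈ T)
  rw [filter_filter, filter_filter] at hpre'
  have h1 : ({i | σ i ∈ T ∧ i ∈ T} : Finset α) = {i ∈ T | σ i ∈ T} := by
    ext; simp [and_comm]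
  have h2 : ({i | σ i ∈ T ∧ i ∉ T} : Finset α) = {i ∈ Tᶜ | σ i ∈ T} := by
    ext; simp [and_comm]
  rw [h1, h2] at hpre'
  omega

section ring

variable {n : ℕ}

lemma injective_sym2Mk_add_one (hn : 3 ≤ n) : Function.Injective fun i : ZMod n => s(i, i + 1) := by
  intro i j h
  rcases Sym2.eq_iff.mp h with ⟨hij, -⟩ | ⟨hij, hji⟩
  · exact hij
  · have h2 : ((2 : ℕ) : ZMod n) = 0 := by push_cast; linear_combination hji - hij
    exact absurd h2 (natCast_ne_zero_of_lt two_pos (by omega))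

lemma ringGraph_edgeFinset [NeZero n] (hn : 3 ≤ n) :
    (ringGraph n).edgeFinset = univ.map ⟨_, injective_sym2Mk_add_one hn⟩ := by
  have h1 : (1 : ZMod n) ≠ 0 := by exact_mod_cast natCast_ne_zero_of_lt one_pos (by omega)
  ext e
  induction e using Sym2.inductionOn with
  | hf i j =>
    simp only [SimpleGraph.mem_edgeFinset, SimpleGraph.mem_edgeSet, mem_map, mem_univ, true_and,
      Function.Embedding.coeFn_mk, Sym2.eq_iff]
    constructor
    · rintro ⟨-, rfl | rfl⟩
      · exact ⟨i, .inl ⟨rfl, rfl⟩⟩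
      · exact ⟨j, .inr ⟨rfl, rfl⟩⟩
    · rintro ⟨k, ⟨rfl, rfl⟩ | ⟨rfl, rfl⟩⟩
      · exact ⟨fun h => h1 (by linear_combination -h), .inl rfl⟩
      · exact ⟨fun h => h1 (by linear_combination h), .inr rfl⟩

lemma phi_ringGraph_indicator [NeZero n] (hn : 3 ≤ n) (α : ℝ) (S T : Finset (ZMod n)) :
    phi (ringGraph n) α S (fun i => if i ∈ T then false else true)
      = (1 + α) * #{i ∈ Tᶜ | i + 1 ∉ T} + #{i ∈ T | i + 1 ∈ T} + #(S ∩ T) := by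
  have hedge (i : ZMod n) :
      coordPayoff α (if i ∈ T then false else true) (if i + 1 ∈ T then false else true)
        = (1 + α) * (if i ∈ {i ∈ Tᶜ | i + 1 ∉ T} then 1 else 0)
          + (if i ∈ {i ∈ T | i + 1 ∈ T} then 1 else 0) := by
    by_cases hi : i ∈ T <;> by_cases hi1 : i + 1 ∈ T <;> simp [coordPayoff, hi, hi1]
  have hy (i : ZMod n) :
      (if (if i ∈ T then false else true) = false then (1 : ℝ) else 0) = if i ∈ T then 1 else 0 := by
    split_ifs <;> simp_all
  simp only [phi, ringGraph_edgeFinset hn, sum_map, Function.Embedding.coeFn_mk, Sym2.lift_mk,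
    hedge, hy, sum_add_distrib, ← mul_sum, sum_boole, filter_mem_eq_inter, univ_inter]

end ring

lemma mem_arc {n : ℕ} {s i : ZMod n} {t : ℕ} : i ∈ arc n s t ↔ ∃ m ≤ t, s + (m : ZMod n) = i := by
  simp [arc]

lemma add_mem_arc {n : ℕ} {s : ZMod n} {m t : ℕ} (hm : m ≤ t) : s + (m : ZMod n) ∈ arc n s t :=
  mem_arc.mpr ⟨m, hm, rfl⟩

section arcs

variable {n p : ℕ} {T : Finset (ZMod n)} {st : Fin p → ZMod n} {len : Fin p → ℕ}

lemma filter_add_one_notMem_eq_image_arc_ends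
    (hcover : T = univ.biUnion fun j => arc n (st j) (len j))
    (hend : ∀ j, st j + (len j : ZMod n) + 1 ∉ T) :
    {i ∈ T | i + 1 ∉ T} = univ.image fun j => st j + (len j : ZMod n) := by
  have hsub (j : Fin p) : arc n (st j) (len j) ⊆ T :=
    hcover ▸ subset_biUnion_of_mem (fun j => arc n (st j) (len j)) (mem_univ j)
  ext i
  simp only [mem_filter, mem_image, mem_univ, true_and]
  constructor
  · rintro ⟨hiT, hi1⟩
    obtain ⟨j, -, hij⟩ := mem_biUnion.mp (hcover ▸ hiT)
    obtain ⟨m, hm, rfl⟩ := mem_arc.mp hij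
    refine ⟨j, ?_⟩
    obtain rfl | hlt := hm.eq_or_lt
    · rfl
    · exact absurd (hsub j (by simpa [add_assoc] using add_mem_arc (s := st j) hlt)) hi1
  · rintro ⟨j, rfl⟩
    exact ⟨hsub j (add_mem_arc le_rfl), hend j⟩

lemma card_image_arc_ends
    (hdisj : ∀ j j' : Fin p, j ≠ j' → Disjoint (arc n (st j) (len j)) (arc n (st j') (len j'))) :
    #(univ.image fun j => st j + (len j : ZMod n)) = p := by
  rw [card_image_of_injective, card_univ, Fintype.card_fin]
  intro j j' h
  by_contra hne
  have hj' : st j + (len j : ZMod n) ∈ arc n (st j') (len j') := by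
    rw [show st j + (len j : ZMod n) = st j' + len j' from h]
    exact add_mem_arc le_rfl
  exact disjoint_left.mp (hdisj j j' hne) (add_mem_arc le_rfl) hj'

end arcs

theorem ring_phi_arcs_general {n : ℕ} [NeZero n] (hn : 3 ≤ n) (α : ℝ) (S T : Finset (ZMod n))
    (p : ℕ) (st : Fin p → ZMod n) (len : Fin p → ℕ)
    (hcover : T = Finset.univ.biUnion fun j => arc n (st j) (len j))
    (hdisj : ∀ j j' : Fin p, j ≠ j' →
      Disjoint (arc n (st j) (len j)) (arc n (st j') (len j')))
    (hmaxarc : ∀ j : Fin p, st j - 1 ∉ T ∧ st j + (len j : ZMod n) + 1 ∉ T) :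
    phi (ringGraph n) α S (fun i => if i ∈ T then false else true)
      = (1 + α) * ((n : ℝ) - (T.card : ℝ) - (p : ℝ)) + ((T.card : ℝ) - (p : ℝ))
        + ∑ j : Fin p, ((S ∩ arc n (st j) (len j)).card : ℝ) := by
  have hexits : #{i ∈ T | i + 1 ∉ T} = p := by
    rw [filter_add_one_notMem_eq_image_arc_ends hcover fun j => (hmaxarc j).2,
      card_image_arc_ends hdisj]
  have hentries : #{i ∈ Tᶜ | i + 1 ∈ T} = p :=
    card_filter_apply_notMem_eq (Equiv.addRight 1) T ▸ hexits
  have hinside := card_filter_add_card_filter_not (s := T) (fun i => i + 1 ∈ T)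
  have houtside := card_filter_add_card_filter_not (s := Tᶜ) (fun i => i + 1 ∈ T)
  have hcard : #Tᶜ + #T = n := (card_compl_add_card T).trans (ZMod.card n)
  have hST : #(S ∩ T) = ∑ j, #(S ∩ arc n (st j) (len j)) := by
    rw [hcover, inter_biUnion, card_biUnion fun j _ j' _ hne =>
      (hdisj j j' hne).mono inter_subset_right inter_subset_right]
  have hxx : (#{i ∈ Tᶜ | i + 1 ∉ T} : ℝ) + p + #T = n := by exact_mod_cast (by omega)
  have hyy : (#{i ∈ T | i + 1 ∈ T} : ℝ) + p = #T := by exact_mod_cast (by omega)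
  rw [phi_ringGraph_indicator hn, hST]
  push_cast
  linear_combination (1 + α) * hxx + hyy

/-- Potential of a ring profile whose `y`-set `T` is a disjoint union of `p` maximal arcs:
`Φ^S(a^T) = (1+α)(n−|T|−p) + (|T|−p) + Σ_j |S∩T_j|`. -/
theorem ring_phi_arcs {n : ℕ} [NeZero n] (hn : 3 ≤ n) (α : ℝ) (S T : Finset (ZMod n))
    (p : ℕ) (hp : 1 ≤ p) (st : Fin p → ZMod n) (len : Fin p → ℕ)
    (hcover : T = Finset.univ.biUnion fun j => arc n (st j) (len j))
    (hdisj : ∀ j j' : Fin p, j ≠ j' →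
      Disjoint (arc n (st j) (len j)) (arc n (st j') (len j')))
    (hmaxarc : ∀ j : Fin p, st j - 1 ∉ T ∧ st j + (len j : ZMod n) + 1 ∉ T)
    (hT0 : 0 < T.card) (hTn : T.card < n) :
    phi (ringGraph n) α S (fun i => if i ∈ T then false else true)
      = (1 + α) * ((n : ℝ) - (T.card : ℝ) - (p : ℝ)) + ((T.card : ℝ) - (p : ℝ))
        + ∑ j : Fin p, ((S ∩ arc n (st j) (len j)).card : ℝ) :=
  ring_phi_arcs_general hn α S T p st len hcover hdisj hmaxarc
end

section
/- On the n-node ring graph, if α > k/n, then for every S⊆N with |S|=k, Φ^S(x⃗) > Φ^S(y⃗); hence no fixed adversary with capability k can make the all-y profile the potential maximizer. Combined with the balanced-set construction, the susceptibility of the ring to fixed intelligent adversaries equals k/n. -/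
open Finset

section Potential

variable {V : Type*} [Fintype V] [DecidableEq V] (G : SimpleGraph V) [DecidableRel G.Adj]
  (α : ℝ) (S : Finset V)

lemma phi_const (b : Bool) :
    phi G α S (fun _ => b) =
      #G.edgeFinset * coordPayoff α b b + ∑ _i ∈ S, (if b = false then (1 : ℝ) else 0) := by
  have hedge : ∀ e : Sym2 V, Sym2.lift ⟨fun _ _ => coordPayoff α b b, fun _ _ => rfl⟩ e =
      coordPayoff α b b := fun e => by induction e using Sym2.inductionOn; rfl
  simp only [phi, hedge, sum_const, nsmul_eq_mul]

lemma phi_allTrue : phi G α S (fun _ => true) = #G.edgeFinset * (1 + α) := by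
  simp [phi_const, coordPayoff]

lemma phi_allFalse : phi G α S (fun _ => false) = #G.edgeFinset + #S := by
  simp [phi_const, coordPayoff]

lemma phi_allFalse_lt_phi_allTrue_iff :
    phi G α S (fun _ => false) < phi G α S (fun _ => true) ↔ (#S : ℝ) < #G.edgeFinset * α := by
  rw [phi_allTrue, phi_allFalse]
  constructor <;> intro <;> linarith

end Potential

lemma ZMod.natCast_ne_zero_of_pos_of_lt {a n : ℕ} (ha : 0 < a) (han : a < n) :
    (a : ZMod n) ≠ 0 := by
  rw [Ne, ZMod.natCast_eq_zero_iff]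
  exact fun hdvd => (Nat.le_of_dvd ha hdvd).not_gt han

lemma ringGraph_edgeFinset_s10 {n : ℕ} [NeZero n] (hn : 2 ≤ n) :
    (ringGraph n).edgeFinset = univ.image fun i : ZMod n => s(i, i + 1) := by
  have hsucc : ∀ i : ZMod n, i ≠ i + 1 := fun i h => by
    have : ((1 : ℕ) : ZMod n) = 0 := by push_cast; linear_combination -h
    exact ZMod.natCast_ne_zero_of_pos_of_lt one_pos hn this
  ext e
  induction e using Sym2.inductionOn with
  | hf i j =>
    rw [SimpleGraph.mem_edgeFinset, SimpleGraph.mem_edgeSet]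
    simp only [ringGraph, mem_image, mem_univ, true_and, Sym2.eq_iff]
    constructor
    · rintro ⟨-, rfl | rfl⟩
      exacts [⟨i, Or.inl ⟨rfl, rfl⟩⟩, ⟨j, Or.inr ⟨rfl, rfl⟩⟩]
    · rintro ⟨a, ⟨rfl, rfl⟩ | ⟨rfl, rfl⟩⟩
      exacts [⟨hsucc a, Or.inl rfl⟩, ⟨(hsucc a).symm, Or.inr rfl⟩]

lemma card_edgeFinset_ringGraph {n : ℕ} [NeZero n] (hn : 3 ≤ n) :
    #(ringGraph n).edgeFinset = n := by
  have htwo : (2 : ZMod n) ≠ 0 := by exact_mod_cast ZMod.natCast_ne_zero_of_pos_of_lt two_pos hn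
  rw [ringGraph_edgeFinset_s10 (by omega), card_image_of_injective, card_univ, ZMod.card]
  intro i j hij
  rcases Sym2.eq_iff.1 hij with ⟨h, -⟩ | ⟨hij, hji⟩
  · exact h
  · exact absurd (by linear_combination hji - hij) htwo

theorem ring_FI_resilience_general {n : ℕ} [NeZero n] (hn : 3 ≤ n) (α : ℝ) (k : ℕ)
    (hα : α > (k : ℝ) / (n : ℝ)) :
    ∀ S : Finset (ZMod n), S.card = k →
      phi (ringGraph n) α S (fun _ => true) > phi (ringGraph n) α S (fun _ => false) ∧
      ¬ (∀ a : ZMod n → Bool, a ≠ (fun _ => false) →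
          phi (ringGraph n) α S (fun _ => false) > phi (ringGraph n) α S a) := by
  intro S hS
  have hgt : phi (ringGraph n) α S (fun _ => false) < phi (ringGraph n) α S (fun _ => true) := by
    rw [phi_allFalse_lt_phi_allTrue_iff, card_edgeFinset_ringGraph hn, hS]
    rwa [gt_iff_lt, div_lt_iff₀' (by positivity)] at hα
  refine ⟨hgt, fun hmax => (hmax _ fun h => ?_).not_gt hgt⟩
  simpa using congrFun h 0

/-- On the `n`-ring, if `α > k/n` then for every `S` with `|S| = k`,
`Φ^S(x⃗) > Φ^S(y⃗)`, hence `y⃗` is not the strict potential maximizer. -/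
theorem ring_FI_resilience {n : ℕ} [NeZero n] (hn : 3 ≤ n) (α : ℝ) (k : ℕ) (hk : k ≤ n)
    (hα : α > (k : ℝ) / (n : ℝ)) :
    ∀ S : Finset (ZMod n), S.card = k →
      phi (ringGraph n) α S (fun _ => true) > phi (ringGraph n) α S (fun _ => false) ∧
      ¬ (∀ a : ZMod n → Bool, a ≠ (fun _ => false) →
          phi (ringGraph n) α S (fun _ => false) > phi (ringGraph n) α S a) :=
  ring_FI_resilience_general hn α k hα
end

section
/- With ε=e^{−β}, the mixture probability P(ε) = (k/n)·ε^{−(U_y+1)}/(ε^{−(U_y+1)}+ε^{−U_x}) + ((n−k)/n)·ε^{−U_y}/(ε^{−U_y}+ε^{−U_x}) satisfies 0 < lim_{ε→0⁺} P(ε)/ε^{max(U_x−U_y−1,0)} < ∞, provided 1≤k≤n−1. -/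
open Finset

private lemma ind_lim (c : ℝ) (hc : 0 ≤ c) :
    Filter.Tendsto (fun x : ℝ => x ^ c) (nhdsWithin 0 (Set.Ioi 0))
      (nhds (if c = 0 then 1 else 0)) := by
  rcases eq_or_lt_of_le hc with h | h
  · simp only [← h, if_pos rfl, Real.rpow_zero]
    exact tendsto_const_nhds
  · rw [if_neg h.ne']
    have h2 : Filter.Tendsto (fun x : ℝ => x ^ c) (nhds 0) (nhds ((0:ℝ) ^ c)) :=
      (Real.continuousAt_rpow_const 0 c (Or.inr h.le)).tendsto
    rw [Real.zero_rpow h.ne'] at h2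
    exact h2.mono_left nhdsWithin_le_nhds

/-- Uniformly random adversary mixture: the transition probability
`P(ε) = (k/n)·ε^{−(U_y+1)}/(ε^{−(U_y+1)}+ε^{−U_x}) + ((n−k)/n)·ε^{−U_y}/(ε^{−U_y}+ε^{−U_x})`
has resistance `max(U_x − U_y − 1, 0)` whenever `1 ≤ k ≤ n−1`. -/
theorem ur_adversary_resistance (Ux Uy : ℝ) (n k : ℕ) (hn : 2 ≤ n)
    (hk1 : 1 ≤ k) (hk : k ≤ n - 1) :
    ∃ L : ℝ, 0 < L ∧
      Filter.Tendsto
        (fun ε : ℝ =>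
          (((k : ℝ) / (n : ℝ)) * (ε ^ (-(Uy + 1)) / (ε ^ (-(Uy + 1)) + ε ^ (-Ux)))
            + (((n : ℝ) - (k : ℝ)) / (n : ℝ)) * (ε ^ (-Uy) / (ε ^ (-Uy) + ε ^ (-Ux))))
          / ε ^ (max (Ux - Uy - 1) 0))
        (nhdsWithin 0 (Set.Ioi 0)) (nhds L) := by
  set m : ℝ := max (Ux - Uy - 1) 0 with hm
  set m' : ℝ := max (-(Ux - Uy - 1)) 0 with hm'
  set M : ℝ := max Uy Ux with hM
  set p : ℝ := M - Uy - m with hp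
  set q : ℝ := M - Uy with hq
  set r : ℝ := M - Ux with hr
  have hm0 : 0 ≤ m := le_max_right _ _
  have hm'0 : 0 ≤ m' := le_max_right _ _
  have hq0 : 0 ≤ q := by have := le_max_left Uy Ux; simp only [hq]; linarith
  have hr0 : 0 ≤ r := by have := le_max_right Uy Ux; simp only [hr]; linarith
  -- m' = m - (Ux - Uy - 1)
  have hmm' : m' = m - (Ux - Uy - 1) := by
    rcases le_total (Ux - Uy - 1) 0 with h | h
    · rw [hm', hm, max_eq_left (neg_nonneg.2 h), max_eq_right h]; ring
    · rw [hm', hm, max_eq_right (neg_nonpos.2 h), max_eq_left h]; ring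
  have hp0 : 0 ≤ p := by
    rcases le_total (Ux - Uy - 1) 0 with h | h
    · have : m = 0 := by rw [hm, max_eq_right h]
      rw [hp, this]; linarith [le_max_left Uy Ux]
    · have : m = Ux - Uy - 1 := by rw [hm, max_eq_left h]
      rw [hp, this]; have := le_max_right Uy Ux; linarith
  have hmor : m = 0 ∨ m' = 0 := by
    rcases le_total (Ux - Uy - 1) 0 with h | h
    · exact Or.inl (by rw [hm, max_eq_right h])
    · exact Or.inr (by rw [hm', max_eq_right (neg_nonpos.2 h)])
  have hqor : q = 0 ∨ r = 0 := by
    rcases le_total Uy Ux with h | h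
    · exact Or.inr (by rw [hr, hM, max_eq_right h]; ring)
    · exact Or.inl (by rw [hq, hM, max_eq_left h]; ring)
  -- indicator values
  have hI : ∀ c : ℝ, (0:ℝ) ≤ (if c = 0 then (1:ℝ) else 0) := by
    intro c; split <;> norm_num
  have hden1 : (0:ℝ) < (if m = 0 then (1:ℝ) else 0) + (if m' = 0 then 1 else 0) := by
    rcases hmor with h | h
    · rw [if_pos h]; have := hI m'; linarith
    · rw [if_pos h]; have := hI m; linarith
  have hden2 : (0:ℝ) < (if q = 0 then (1:ℝ) else 0) + (if r = 0 then 1 else 0) := by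
    rcases hqor with h | h
    · rw [if_pos h]; have := hI r; linarith
    · rw [if_pos h]; have := hI q; linarith
  have hkn : (0:ℝ) < (k:ℝ) / (n:ℝ) := by
    apply div_pos
    · exact_mod_cast Nat.lt_of_lt_of_le Nat.zero_lt_one hk1
    · exact_mod_cast Nat.lt_of_lt_of_le Nat.zero_lt_two hn
  have hnk : (0:ℝ) ≤ ((n:ℝ) - (k:ℝ)) / (n:ℝ) := by
    apply div_nonneg
    · have : k ≤ n := le_trans hk (Nat.sub_le n 1)
      have : (k:ℝ) ≤ (n:ℝ) := by exact_mod_cast this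
      linarith
    · positivity
  refine ⟨((k:ℝ)/(n:ℝ)) * (1 / ((if m = 0 then (1:ℝ) else 0) + (if m' = 0 then 1 else 0)))
      + (((n:ℝ)-(k:ℝ))/(n:ℝ)) * ((if p = 0 then (1:ℝ) else 0) /
          ((if q = 0 then (1:ℝ) else 0) + (if r = 0 then 1 else 0))), ?_, ?_⟩
  · have h1 : (0:ℝ) < ((k:ℝ)/(n:ℝ)) * (1 / ((if m = 0 then (1:ℝ) else 0) + (if m' = 0 then 1 else 0))) :=
      mul_pos hkn (by positivity)
    have h2 : (0:ℝ) ≤ (((n:ℝ)-(k:ℝ))/(n:ℝ)) * ((if p = 0 then (1:ℝ) else 0) /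
        ((if q = 0 then (1:ℝ) else 0) + (if r = 0 then 1 else 0))) :=
      mul_nonneg hnk (div_nonneg (hI p) hden2.le)
    linarith
  · have hlim : Filter.Tendsto
        (fun x : ℝ => ((k:ℝ)/(n:ℝ)) * (1 / (x ^ m + x ^ m'))
          + (((n:ℝ)-(k:ℝ))/(n:ℝ)) * (x ^ p / (x ^ q + x ^ r)))
        (nhdsWithin 0 (Set.Ioi 0))
        (nhds (((k:ℝ)/(n:ℝ)) * (1 / ((if m = 0 then (1:ℝ) else 0) + (if m' = 0 then 1 else 0)))
          + (((n:ℝ)-(k:ℝ))/(n:ℝ)) * ((if p = 0 then (1:ℝ) else 0) /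
              ((if q = 0 then (1:ℝ) else 0) + (if r = 0 then 1 else 0))))) := by
      apply Filter.Tendsto.add
      · exact Filter.Tendsto.const_mul _
          (Filter.Tendsto.div tendsto_const_nhds
            ((ind_lim m hm0).add (ind_lim m' hm'0)) hden1.ne')
      · exact Filter.Tendsto.const_mul _
          (Filter.Tendsto.div (ind_lim p hp0)
            ((ind_lim q hq0).add (ind_lim r hr0)) hden2.ne')
    refine hlim.congr' ?_
    filter_upwards [self_mem_nhdsWithin] with x hx
    have hxpos : (0:ℝ) < x := hx
    have hpow : ∀ c : ℝ, (0:ℝ) < x ^ c := fun c => Real.rpow_pos_of_pos hxpos c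
    -- term 1
    have key1 : x ^ (-(Uy + 1)) * x ^ m' = x ^ (-Ux) * x ^ m := by
      rw [← Real.rpow_add hxpos, ← Real.rpow_add hxpos]
      congr 1; rw [hmm']; ring
    have t1 : x ^ (-(Uy + 1)) / (x ^ (-(Uy + 1)) + x ^ (-Ux)) / x ^ m
        = 1 / (x ^ m + x ^ m') := by
      rw [div_div, div_eq_div_iff (by positivity) (by positivity)]
      linear_combination key1
    -- term 2
    have key2a : x ^ q * x ^ (-Uy) = x ^ p * x ^ (-Uy) * x ^ m := by
      rw [← Real.rpow_add hxpos, ← Real.rpow_add hxpos, ← Real.rpow_add hxpos]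
      congr 1; rw [hp, hq]; ring
    have key2b : x ^ r * x ^ (-Uy) = x ^ p * x ^ (-Ux) * x ^ m := by
      rw [← Real.rpow_add hxpos, ← Real.rpow_add hxpos, ← Real.rpow_add hxpos]
      congr 1; rw [hp, hr, hq]; ring
    have t2 : x ^ (-Uy) / (x ^ (-Uy) + x ^ (-Ux)) / x ^ m
        = x ^ p / (x ^ q + x ^ r) := by
      rw [div_div, div_eq_div_iff (by positivity) (by positivity)]
      linear_combination key2a + key2b
    calc ((k:ℝ)/(n:ℝ)) * (1 / (x ^ m + x ^ m'))
          + (((n:ℝ)-(k:ℝ))/(n:ℝ)) * (x ^ p / (x ^ q + x ^ r))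
        = ((k:ℝ)/(n:ℝ)) * (x ^ (-(Uy + 1)) / (x ^ (-(Uy + 1)) + x ^ (-Ux)) / x ^ m)
          + (((n:ℝ)-(k:ℝ))/(n:ℝ)) * (x ^ (-Uy) / (x ^ (-Uy) + x ^ (-Ux)) / x ^ m) := by
          rw [t1, t2]
      _ = (((k:ℝ)/(n:ℝ)) * (x ^ (-(Uy + 1)) / (x ^ (-(Uy + 1)) + x ^ (-Ux)))
          + (((n:ℝ)-(k:ℝ))/(n:ℝ)) * (x ^ (-Uy) / (x ^ (-Uy) + x ^ (-Ux)))) / x ^ m := by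
          rw [add_div, mul_div_assoc, mul_div_assoc]
end

section
/- On the ring graph with n≥5 nodes and 0<α<1, a profile a∉{x⃗,y⃗} is a strict Nash equilibrium of the game with adversary-influenced utilities Ũ_i(·,S̄(a)) (for a policy S̄ with |S̄(a)|=2) only if the x-players of a form a single contiguous arc [i,j] with 1 ≤ j−i ≤ n−3 and S̄(a) = {i−1, j+1}. -/
open Finset

/-- Utility of agent `i`: sum of pairwise payoffs with its neighbors. -/
def util {V : Type*} [Fintype V] [DecidableEq V] (G : SimpleGraph V) [DecidableRel G.Adj]
    (α : ℝ) (a : V → Bool) (i : V) : ℝ :=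
  ∑ j ∈ G.neighborFinset i, coordPayoff α (a i) (a j)

/-- Adversary-influenced utility: bonus 1 for playing `y` (= `false`) while influenced. -/
def utilTilde {V : Type*} [Fintype V] [DecidableEq V] (G : SimpleGraph V) [DecidableRel G.Adj]
    (α : ℝ) (S : Finset V) (a : V → Bool) (i : V) : ℝ :=
  util G α a i + if i ∈ S ∧ a i = false then 1 else 0

/-!
Flipping the action of agent `i` on the ring compares `(1 + α) k` with `2 - k + [i ∈ S]`, where `k`
is the number of `x`-neighbours of `i`. For `α ≥ 0` strictness forces three local rules: an
`x`-player has an `x`-neighbour, a `y`-player does not have two, and a `y`-player with an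
`x`-neighbour is influenced. Start at a `y`→`x` step `i - 1, i` and follow the `x`-run `[i, i + t]`:
the two `y`-players flanking it are distinct and influenced, so they exhaust `S`. A later `x`-player
would produce a further `y`→`x` step whose `y`-player would have to be one of them, which forces a
lone `y` between two `x`-players.
-/

lemma Nat.exists_forall_le_and_not_succ {p : ℕ → Prop} (h0 : p 0) {N : ℕ} (hN : ¬p N) :
    ∃ t < N, (∀ m ≤ t, p m) ∧ ¬p (t + 1) := by
  classical
  have hex : ∃ m, ¬p m := ⟨N, hN⟩
  have hpos : 0 < Nat.find hex := (Nat.find_pos hex).mpr (not_not.mpr h0)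
  refine ⟨Nat.find hex - 1, by have := Nat.find_min' hex hN; omega, fun m hm => ?_, ?_⟩
  · exact not_not.mp (Nat.find_min hex (by omega))
  · rw [Nat.sub_add_cancel hpos]
    exact Nat.find_spec hex

namespace ZMod

variable {n : ℕ}

lemma natCast_inj_of_lt {p q : ℕ} (hp : p < n) (hq : q < n) :
    (p : ZMod n) = q ↔ p = q := by
  refine ⟨fun h => ?_, congrArg _⟩
  simpa [val_cast_of_lt hp, val_cast_of_lt hq] using congrArg val h

lemma natCast_ne_zero_of_lt {p : ℕ} (hp0 : p ≠ 0) (hp : p < n) : (p : ZMod n) ≠ 0 := by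
  rw [Ne, natCast_eq_zero_iff]
  exact fun h => hp0 (Nat.eq_zero_of_dvd_of_lt h hp)

lemma natCast_sub_one_self [NeZero n] : ((n - 1 : ℕ) : ZMod n) = -1 := by
  rw [Nat.cast_sub NeZero.one_le, natCast_self, Nat.cast_one, zero_sub]

end ZMod

section RingGame

variable {n : ℕ} [NeZero n]

lemma ringGraph_neighborFinset (hn : 2 ≤ n) (i : ZMod n) :
    (ringGraph n).neighborFinset i = {i + 1, i - 1} := by
  have : Fact (1 < n) := ⟨hn⟩
  ext j
  rw [SimpleGraph.mem_neighborFinset]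
  simp only [ringGraph, mem_insert, mem_singleton]
  constructor
  · rintro ⟨-, rfl | rfl⟩
    · exact Or.inl rfl
    · exact Or.inr (add_sub_cancel_right j 1).symm
  · rintro (rfl | rfl)
    · exact ⟨by simp, Or.inl rfl⟩
    · exact ⟨fun h => one_ne_zero (by linear_combination h), Or.inr (sub_add_cancel i 1).symm⟩

lemma utilTilde_ringGraph (hn : 3 ≤ n) (α : ℝ) (S : Finset (ZMod n)) (a : ZMod n → Bool)
    (i : ZMod n) :
    utilTilde (ringGraph n) α S a i =
      coordPayoff α (a i) (a (i + 1)) + coordPayoff α (a i) (a (i - 1))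
        + if i ∈ S ∧ a i = false then 1 else 0 := by
  have h2 : (2 : ZMod n) ≠ 0 := by
    exact_mod_cast ZMod.natCast_ne_zero_of_lt (p := 2) (by omega) (by omega)
  have hne : i + 1 ≠ i - 1 := fun h => h2 (by linear_combination h)
  rw [utilTilde, util, ringGraph_neighborFinset (by omega), sum_pair hne]

def IsStrictNash {V : Type*} [Fintype V] [DecidableEq V] (G : SimpleGraph V)
    [DecidableRel G.Adj] (α : ℝ) (S : Finset V) (a : V → Bool) : Prop :=
  ∀ (i : V) (b : Bool), b ≠ a i → utilTilde G α S a i > utilTilde G α S (Function.update a i b) i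

variable {α : ℝ} {S : Finset (ZMod n)} {a : ZMod n → Bool}

lemma IsStrictNash.ringGraph_payoff_lt (h : IsStrictNash (ringGraph n) α S a) (hn : 3 ≤ n)
    (i : ZMod n) :
    coordPayoff α (!a i) (a (i + 1)) + coordPayoff α (!a i) (a (i - 1))
        + (if i ∈ S ∧ (!a i) = false then 1 else 0) <
      coordPayoff α (a i) (a (i + 1)) + coordPayoff α (a i) (a (i - 1))
        + if i ∈ S ∧ a i = false then 1 else 0 := by
  have : Fact (1 < n) := ⟨by omega⟩
  have hdev := h i (!a i) (Bool.not_ne_self _)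
  rw [utilTilde_ringGraph hn, utilTilde_ringGraph hn, Function.update_self,
    Function.update_of_ne (by simp), Function.update_of_ne (by simp [sub_eq_self])] at hdev
  exact hdev

lemma IsStrictNash.ringGraph_adj_true_of_true (h : IsStrictNash (ringGraph n) α S a)
    (hn : 3 ≤ n) {i : ZMod n} (hi : a i = true) : a (i + 1) = true ∨ a (i - 1) = true := by
  by_contra! hadj
  simp only [ne_eq, Bool.not_eq_true] at hadj
  have := h.ringGraph_payoff_lt hn i
  simp only [hi, hadj, Bool.not_true, coordPayoff] at this
  split_ifs at this <;> linarith

lemma IsStrictNash.ringGraph_true_of_adj_true (h : IsStrictNash (ringGraph n) α S a)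
    (hn : 3 ≤ n) (hα : 0 ≤ α) {i : ZMod n} (hs : a (i + 1) = true) (hp : a (i - 1) = true) :
    a i = true := by
  by_contra hi
  simp only [Bool.not_eq_true] at hi
  have := h.ringGraph_payoff_lt hn i
  simp only [hi, hs, hp, Bool.not_false, coordPayoff] at this
  split_ifs at this <;> linarith

lemma IsStrictNash.ringGraph_mem_of_false_of_adj_true (h : IsStrictNash (ringGraph n) α S a)
    (hn : 3 ≤ n) (hα : 0 ≤ α) {i : ZMod n} (hi : a i = false)
    (hadj : a (i + 1) = true ∨ a (i - 1) = true) : i ∈ S := by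
  by_contra hiS
  have := h.ringGraph_payoff_lt hn i
  simp only [hi, hiS, Bool.not_false, false_and, and_true, if_false] at this
  rcases hadj with hs | hp
  · cases hp : a (i - 1) <;> simp only [hs, hp, coordPayoff] at this <;> linarith
  · cases hs : a (i + 1) <;> simp only [hs, hp, coordPayoff] at this <;> linarith

end RingGame

section RingProfile

variable {n : ℕ} {a : ZMod n → Bool} {i : ZMod n} {t : ℕ}

lemma filter_eq_arc [NeZero n] (ht : t < n) (h : ∀ m < n, a (i + m) = true ↔ m ≤ t) :
    univ.filter (fun v => a v = true) = arc n i t := by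
  ext v
  simp only [mem_filter, mem_univ, true_and, arc, mem_image, mem_range, Nat.lt_succ_iff]
  constructor
  · intro hv
    have hv' : a (i + (v - i).val) = true := by simpa using hv
    exact ⟨(v - i).val, (h _ (ZMod.val_lt _)).mp hv', by simp⟩
  · rintro ⟨m, hm, rfl⟩
    exact (h m (by omega)).mpr hm

lemma exists_false_true_of_exists [NeZero n] (hT : ∃ v, a v = true) (hF : ∃ v, a v = false) :
    ∃ i, a (i - 1) = false ∧ a i = true := by
  obtain ⟨v, hv⟩ := hT
  obtain ⟨w, hw⟩ := hF
  obtain ⟨t, -, hrun, hnext⟩ := Nat.exists_forall_le_and_not_succ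
    (p := fun m : ℕ => a (w + m) = false) (by simpa using hw) (N := (v - w).val) (by simpa using hv)
  refine ⟨w + t + 1, ?_, by simpa [add_assoc] using hnext⟩
  simpa using hrun t le_rfl

lemma exists_run_of_false_true [NeZero n] (hprev : a (i - 1) = false) (hi : a i = true) :
    ∃ t, t + 2 ≤ n ∧ (∀ m ≤ t, a (i + m) = true) ∧ a (i + t + 1) = false := by
  obtain ⟨t, htn, hrun, hnext⟩ := Nat.exists_forall_le_and_not_succ
    (p := fun m : ℕ => a (i + m) = true) (by simpa using hi) (N := n - 1)
    (by simpa [ZMod.natCast_sub_one_self, ← sub_eq_add_neg] using hprev)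
  exact ⟨t, by omega, hrun, by simpa [add_assoc] using hnext⟩

variable {S : Finset (ZMod n)}

lemma one_le_of_run (hx : ∀ i, a i = true → a (i + 1) = true ∨ a (i - 1) = true)
    (hprev : a (i - 1) = false) (hrun : ∀ m ≤ t, a (i + m) = true)
    (hnext : a (i + t + 1) = false) : 1 ≤ t := by
  by_contra! h0
  obtain rfl : t = 0 := by omega
  rcases hx i (by simpa using hrun 0 le_rfl) with h | h
  · simp [h] at hnext
  · simp [h] at hprev

lemma add_three_le_of_run (hy : ∀ i, a (i + 1) = true → a (i - 1) = true → a i = true)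
    (ht : t + 2 ≤ n) (hprev : a (i - 1) = false) (hrun : ∀ m ≤ t, a (i + m) = true) :
    t + 3 ≤ n := by
  by_contra! h
  have htn : (t : ZMod n) + 2 = 0 := by
    simpa using congrArg (Nat.cast : ℕ → ZMod n) (show t + 2 = n by omega)
  have hleft : a (i - 1 - 1) = true := by
    convert hrun t le_rfl using 2
    linear_combination -htn
  have := hy (i - 1) (by simpa using hrun 0 (Nat.zero_le t)) hleft
  simp [this] at hprev

lemma eq_pair_of_run (hS : ∀ i, a i = false → a (i + 1) = true ∨ a (i - 1) = true → i ∈ S)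
    (hcard : S.card ≤ 2) (ht : t + 3 ≤ n) (hprev : a (i - 1) = false)
    (hrun : ∀ m ≤ t, a (i + m) = true) (hnext : a (i + t + 1) = false) :
    S = {i - 1, i + t + 1} := by
  have hne : i - 1 ≠ i + t + 1 := fun h =>
    ZMod.natCast_ne_zero_of_lt (n := n) (p := t + 2) (by omega) (by omega)
      (by push_cast; linear_combination -h)
  refine (eq_of_subset_of_card_le (insert_subset_iff.mpr ⟨?_, singleton_subset_iff.mpr ?_⟩)
    (by rw [card_pair hne]; exact hcard)).symm
  · exact hS _ hprev (Or.inl (by simpa using hrun 0 (Nat.zero_le t)))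
  · exact hS _ hnext (Or.inr (by simpa using hrun t le_rfl))

lemma false_of_run (hy : ∀ i, a (i + 1) = true → a (i - 1) = true → a i = true)
    (hS : ∀ i, a i = false → a (i + 1) = true ∨ a (i - 1) = true → i ∈ S)
    (hSeq : S = {i - 1, i + t + 1}) (hrun : ∀ m ≤ t, a (i + m) = true)
    (hnext : a (i + t + 1) = false) {m : ℕ} (hm : t + 1 ≤ m) (hmn : m < n) :
    a (i + m) = false := by
  induction m, hm using Nat.le_induction with
  | base => simpa [add_assoc] using hnext
  | succ m hm ih =>
    have hfalse := ih (by omega)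
    by_contra htrue
    rw [Bool.not_eq_false] at htrue
    have hmem := hS _ hfalse (Or.inl (by simpa [add_assoc] using htrue))
    rw [hSeq, mem_insert, mem_singleton] at hmem
    rcases hmem with h | h
    · exact ZMod.natCast_ne_zero_of_lt (n := n) (p := m + 1) (by omega) hmn
        (by push_cast; linear_combination h)
    · obtain rfl : m = t + 1 := (ZMod.natCast_inj_of_lt (n := n) (by omega) (by omega)).mp
        (by push_cast; linear_combination h)
      have hright : a (i + t + 1 + 1) = true := by
        convert htrue using 2
        push_cast
        ring
      have := hy (i + t + 1) hright (by simpa using hrun t le_rfl)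
      simp [this] at hnext

end RingProfile

theorem exists_arc_of_ring_rules {n : ℕ} [NeZero n] {a : ZMod n → Bool} {S : Finset (ZMod n)}
    (hx : ∀ i, a i = true → a (i + 1) = true ∨ a (i - 1) = true)
    (hy : ∀ i, a (i + 1) = true → a (i - 1) = true → a i = true)
    (hS : ∀ i, a i = false → a (i + 1) = true ∨ a (i - 1) = true → i ∈ S)
    (hcard : S.card ≤ 2) (hT : ∃ v, a v = true) (hF : ∃ v, a v = false) :
    ∃ (i : ZMod n) (t : ℕ), 1 ≤ t ∧ t ≤ n - 3 ∧
      univ.filter (fun v => a v = true) = arc n i t ∧ S = {i - 1, i + (t : ZMod n) + 1} := by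
  obtain ⟨i, hprev, hi⟩ := exists_false_true_of_exists hT hF
  obtain ⟨t, ht2, hrun, hnext⟩ := exists_run_of_false_true hprev hi
  have ht3 := add_three_le_of_run hy ht2 hprev hrun
  have hSeq := eq_pair_of_run hS hcard ht3 hprev hrun hnext
  refine ⟨i, t, one_le_of_run hx hprev hrun hnext, by omega,
    filter_eq_arc (by omega) fun m hm => ⟨fun h => ?_, hrun m⟩, hSeq⟩
  by_contra! htm
  simp [false_of_run hy hS hSeq hrun hnext htm hm] at h

theorem ring_MI_k2_recurrent_characterization_general {n : ℕ} [NeZero n] (hn : 5 ≤ n) (α : ℝ)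
    (hα0 : 0 < α)
    (Sbar : (ZMod n → Bool) → Finset (ZMod n)) (a : ZMod n → Bool)
    (hcard : (Sbar a).card = 2)
    (hax : a ≠ fun _ => true) (hay : a ≠ fun _ => false)
    (hnash : ∀ (i : ZMod n) (b : Bool), b ≠ a i →
      utilTilde (ringGraph n) α (Sbar a) a i
        > utilTilde (ringGraph n) α (Sbar a) (Function.update a i b) i) :
    ∃ (i : ZMod n) (t : ℕ), 1 ≤ t ∧ t ≤ n - 3 ∧
      (Finset.univ.filter fun v => a v = true) = arc n i t ∧
      Sbar a = {i - 1, i + (t : ZMod n) + 1} := by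
  have h : IsStrictNash (ringGraph n) α (Sbar a) a := hnash
  have hn3 : 3 ≤ n := by omega
  obtain ⟨v, hv⟩ := Function.ne_iff.mp hay
  obtain ⟨w, hw⟩ := Function.ne_iff.mp hax
  exact exists_arc_of_ring_rules (fun _ => h.ringGraph_adj_true_of_true hn3)
    (fun _ => h.ringGraph_true_of_adj_true hn3 hα0.le)
    (fun _ => h.ringGraph_mem_of_false_of_adj_true hn3 hα0.le) hcard.le
    ⟨v, by simpa using hv⟩ ⟨w, by simpa using hw⟩

/-- On a ring with `n ≥ 5` and a capability-2 mobile intelligent policy, a strict Nash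
profile other than `x⃗`, `y⃗` must have its `x`-players forming one arc `[i, i+t]` with
`1 ≤ t ≤ n−3`, and the adversary must influence the two endpoints `{i−1, i+t+1}`. -/
theorem ring_MI_k2_recurrent_characterization {n : ℕ} [NeZero n] (hn : 5 ≤ n) (α : ℝ)
    (hα0 : 0 < α) (hα1 : α < 1)
    (Sbar : (ZMod n → Bool) → Finset (ZMod n)) (a : ZMod n → Bool)
    (hcard : (Sbar a).card = 2)
    (hax : a ≠ fun _ => true) (hay : a ≠ fun _ => false)
    (hnash : ∀ (i : ZMod n) (b : Bool), b ≠ a i →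
      utilTilde (ringGraph n) α (Sbar a) a i
        > utilTilde (ringGraph n) α (Sbar a) (Function.update a i b) i) :
    ∃ (i : ZMod n) (t : ℕ), 1 ≤ t ∧ t ≤ n - 3 ∧
      (Finset.univ.filter fun v => a v = true) = arc n i t ∧
      Sbar a = {i - 1, i + (t : ZMod n) + 1} :=
  ring_MI_k2_recurrent_characterization_general hn α hα0 Sbar a hcard hax hay hnash
end
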